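/- arXiv:2503.06379 — 2 statements merged into one kernel-verified Lean document; each statement's English description precedes it below -/
import Mathlib

section
/- Let G be a finite group and P a Sylow 2-subgroup of G. Suppose |P| = 2 and the index of the normalizer N_G(P) in G is 3. Then G is isomorphic to S_3 × A for some finite group A of odd order, where S_3 is the symmetric group on 3 letters. -/
/-!
Let `ψ : G →* Perm (Sylow 2 G) ≅ S₃` be the conjugation action on the three Sylow 2-subgroups
and `A = ker ψ`. Each element of `A` normalizes, hence centralizes, every Sylow subgroup of
order 2, so `A` centralizes every conjugate of the generator `t` of `P`. Take a conjugate
`t' = g t g⁻¹` with `g • P ≠ P` and put `y = t t'`. Burnside's transfer theorem gives `P` a normal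
complement of odd order and index 2; it contains `y`, and since `t` inverts `y` and commutes with
`y⁶ ∈ A`, we get `y³ = 1`. Hence `H = ⟨t, y⟩` has order at most 6, while `ψ t` and `ψ y` have
orders 2 and 3, so `ψ` maps `H` isomorphically onto `S₃`. As `H` centralizes `A`, `G ≅ H × A`,
and `|A| = |G| / 6` is odd because `|G|₂ = 2`.
-/

open Subgroup MulAction

section

variable {G : Type*} [Group G]

theorem Subgroup.normalizer_le_centralizer_of_card_eq_two {H : Subgroup G}
    (hH : Nat.card H = 2) : normalizer (H : Set G) ≤ centralizer (H : Set G) := by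
  intro g hg
  rw [mem_centralizer_iff]
  intro h hh
  rcases eq_or_ne h 1 with rfl | h1
  · simp
  obtain ⟨u, -, hu⟩ := (Nat.card_eq_two_iff' (1 : H)).mp hH
  have hconj : g * h * g⁻¹ ∈ H := (mem_normalizer_iff.mp hg h).mp hh
  have hne : (⟨g * h * g⁻¹, hconj⟩ : H) ≠ 1 := by simpa [Subtype.ext_iff] using h1
  have hh1 : (⟨h, hh⟩ : H) ≠ 1 := by simpa [Subtype.ext_iff] using h1
  have heq := congrArg Subtype.val ((hu _ hne).trans (hu _ hh1).symm)
  exact (mul_inv_eq_iff_eq_mul.mp heq).symm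

theorem conj_mul_eq_inv_of_sq_eq_one {t s : G} (ht : t ^ 2 = 1) (hs : s ^ 2 = 1) :
    t * (t * s) * t⁻¹ = (t * s)⁻¹ := by
  have ht' : t⁻¹ = t := inv_eq_of_mul_eq_one_right (by rw [← sq, ht])
  have hs' : s⁻¹ = s := inv_eq_of_mul_eq_one_right (by rw [← sq, hs])
  rw [mul_inv_rev, ht', hs', ← mul_assoc, ← sq, ht, one_mul]

theorem mem_normalizer_zpowers_of_conj_eq_inv [Finite G] {t y : G} (h : t * y * t⁻¹ = y⁻¹) :
    t ∈ normalizer (zpowers y : Set G) := by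
  refine mem_normalizer_fintype fun n hn => ?_
  obtain ⟨k, rfl⟩ := mem_zpowers_iff.mp hn
  rw [← conj_zpow, h, inv_zpow']
  exact zpow_mem_zpowers y (-k)

theorem orderOf_dvd_of_conj_eq_inv {t y : G} {n : ℕ} (h : t * y * t⁻¹ = y⁻¹)
    (hc : Commute t (y ^ n)) (hy : Odd (orderOf y)) : orderOf y ∣ n := by
  have hinv : y ^ n = (y ^ n)⁻¹ := by
    rw [← inv_pow, ← h, conj_pow, hc.eq, mul_inv_cancel_right]
  have : y ^ (2 * n) = 1 := by
    rw [two_mul, pow_add]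
    nth_rewrite 1 [hinv]
    exact inv_mul_cancel _
  exact (Nat.Coprime.dvd_of_dvd_mul_left hy.coprime_two_right (orderOf_dvd_of_pow_eq_one this))

theorem Subgroup.card_sup_le_of_le_normalizer {H N : Subgroup G}
    (hHN : H ≤ normalizer (N : Set G)) : Nat.card ↥(H ⊔ N) ≤ Nat.card H * Nat.card N := by
  change Nat.card ((H ⊔ N : Subgroup G) : Set G) ≤ _
  rw [coe_mul_of_left_le_normalizer_right H N hHN]
  exact Set.natCard_mul_le

theorem Subgroup.eq_top_of_mem_of_coprime_orderOf [Finite G] {S : Subgroup G} {a b : G}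
    (ha : a ∈ S) (hb : b ∈ S) (hab : (orderOf a).Coprime (orderOf b))
    (hG : Nat.card G = orderOf a * orderOf b) : S = ⊤ :=
  eq_top_of_card_eq S <| Nat.dvd_antisymm (card_subgroup_dvd_card S) <|
    hG ▸ hab.mul_dvd_of_dvd_of_dvd (S.orderOf_dvd_natCard ha) (S.orderOf_dvd_natCard hb)

theorem MonoidHom.noncommCoprod_subtype_ker_bijective {Q : Type*} [Group Q] (ψ : G →* Q)
    {H : Subgroup G} (hH : Function.Bijective (ψ.domRestrict H))
    (hcomm : H ≤ centralizer ψ.ker) :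
    Function.Bijective (H.subtype.noncommCoprod ψ.ker.subtype
      fun h a => (mem_centralizer_iff.mp (hcomm h.2) a a.2).symm) := by
  constructor
  · rintro ⟨h, a⟩ ⟨h', a'⟩ heq
    have heq : (h : G) * a = h' * a' := heq
    have hψ : ψ h = ψ h' := by
      simpa [mem_ker.mp a.2, mem_ker.mp a'.2] using congrArg ψ heq
    obtain rfl : h = h' := hH.1 hψ
    simpa using heq
  · intro g
    obtain ⟨h, hh⟩ := hH.2 (ψ g)
    exact ⟨(h, ⟨h⁻¹ * g, by simp_all [mem_ker]⟩), mul_inv_cancel_left (h : G) g⟩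

noncomputable def MonoidHom.mulEquivProdKer {Q : Type*} [Group Q] (ψ : G →* Q) (H : Subgroup G)
    (hH : Function.Bijective (ψ.domRestrict H)) (hcomm : H ≤ centralizer ψ.ker) :
    G ≃* H × ψ.ker :=
  (MulEquiv.ofBijective _ (ψ.noncommCoprod_subtype_ker_bijective hH hcomm)).symm

theorem Sylow.eq_of_le_normalizer {p : ℕ} {P Q : Sylow p G}
    (h : (P : Subgroup G) ≤ normalizer (Q : Set G)) : P = Q :=
  Sylow.ext (P.3 Q.2 (P.2.sylow_mem_fixedPoints_iff.mp
    ((P : Subgroup G).sylow_mem_fixedPoints_iff.mpr h))).symm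

theorem Sylow.smul_ne_of_zpowers_eq {p : ℕ} {P Q : Sylow p G} {t : G}
    (ht : zpowers t = (P : Subgroup G)) (hPQ : P ≠ Q) : t • Q ≠ Q := fun h =>
  hPQ <| eq_of_le_normalizer <| ht ▸ zpowers_le.mpr (smul_eq_iff_mem_normalizer.mp h)

theorem Sylow.exists_smul_ne [Finite G] {p : ℕ} [Fact p.Prime] (P : Sylow p G)
    (h : 1 < Nat.card (Sylow p G)) : ∃ g : G, g • P ≠ P := by
  have := Finite.one_lt_card_iff_nontrivial.mp h
  obtain ⟨Q, hQ⟩ := exists_ne P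
  obtain ⟨g, rfl⟩ := MulAction.exists_smul_eq G P Q
  exact ⟨g, hQ⟩

theorem Sylow.not_dvd_of_card_eq_mul [Finite G] {p : ℕ} [Fact p.Prime]
    (P : Sylow p G) (hP : Nat.card P = p) {m : ℕ} (h : Nat.card G = p * m) : ¬p ∣ m := by
  have hindex : P.index = m := by
    refine Nat.eq_of_mul_eq_mul_left (Fact.out : p.Prime).pos ?_
    rw [← h, ← P.card_mul_index, hP]
  exact hindex ▸ P.not_dvd_index

theorem ker_toPermHom_sylow_le_centralizer (P : Sylow 2 G) (hP : Nat.card P = 2) :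
    (toPermHom G (Sylow 2 G)).ker ≤ centralizer (P : Set G) := fun a ha =>
  normalizer_le_centralizer_of_card_eq_two hP <| Sylow.smul_eq_iff_mem_normalizer.mp <| by
    simpa using congrArg (· P) (MonoidHom.mem_ker.mp ha)

theorem odd_orderOf_mul_conj [Finite G] (P : Sylow 2 G) (hP : Nat.card P = 2) {t : G}
    (htP : t ∈ P) (ht : t ≠ 1) (g : G) : Odd (orderOf (t * (g * t * g⁻¹))) := by
  have hPc := normalizer_le_centralizer_of_card_eq_two hP
  set K := (MonoidHom.transferSylow P hPc).ker
  have hK := MonoidHom.ker_transferSylow_isComplement' P hPc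
  have htK : t ∉ K := fun h => ht (disjoint_def.mp hK.disjoint h htP)
  have hgtK : g * t * g⁻¹ ∉ K := fun h => htK <| by
    simpa [mul_assoc] using Normal.conj_mem inferInstance _ h g⁻¹
  have hyK : t * (g * t * g⁻¹) ∈ K :=
    (mul_mem_iff_of_index_two (hK.symm.index_eq_card.trans hP)).mpr (iff_of_false htK hgtK)
  have hKodd : Odd (Nat.card K) :=
    Nat.not_even_iff_odd.mp fun h => MonoidHom.not_dvd_card_ker_transferSylow P hPc h.two_dvd
  exact hKodd.of_dvd_nat (K.orderOf_dvd_natCard hyK)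

theorem mul_conj_pow_three_eq_one [Finite G] (P : Sylow 2 G) (hP : Nat.card P = 2)
    (hN : Nat.card (Sylow 2 G) = 3) {t : G} (htP : t ∈ P) (ht : orderOf t = 2) (g : G) :
    (t * (g * t * g⁻¹)) ^ 3 = 1 := by
  set y := t * (g * t * g⁻¹)
  have ht2 : t ^ 2 = 1 := ht ▸ pow_orderOf_eq_one t
  have hinv : t * y * t⁻¹ = y⁻¹ :=
    conj_mul_eq_inv_of_sq_eq_one ht2 (by rw [conj_pow, ht2]; group)
  have hy6 : y ^ 6 ∈ (toPermHom G (Sylow 2 G)).ker := by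
    have : Nat.card (Equiv.Perm (Sylow 2 G)) = 6 := by rw [Nat.card_perm, hN]; rfl
    rw [MonoidHom.mem_ker, map_pow, ← this]
    exact pow_card_eq_one'
  have hc : Commute t (y ^ 6) :=
    mem_centralizer_iff.mp (ker_toPermHom_sylow_le_centralizer P hP hy6) t htP
  have hodd := odd_orderOf_mul_conj P hP htP (by rintro rfl; simp at ht) g
  have hdvd : orderOf y ∣ 2 * 3 := orderOf_dvd_of_conj_eq_inv hinv hc hodd
  exact orderOf_dvd_iff_pow_eq_one.mp (Nat.Coprime.dvd_of_dvd_mul_left hodd.coprime_two_right hdvd)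

theorem map_toPermHom_sup_zpowers_mul_conj_eq_top [Finite G] (P : Sylow 2 G)
    (hN : Nat.card (Sylow 2 G) = 3) {t : G} (hPt : zpowers t = (P : Subgroup G))
    (ht2 : t ^ 2 = 1) {g : G} (hg : g • P ≠ P) (hy : (t * (g * t * g⁻¹)) ^ 3 = 1) :
    ((P : Subgroup G) ⊔ zpowers (t * (g * t * g⁻¹))).map (toPermHom G (Sylow 2 G)) = ⊤ := by
  set ψ := toPermHom G (Sylow 2 G)
  have htP : t ∈ (P : Subgroup G) := hPt ▸ mem_zpowers t
  have htP' : t • P = P := Sylow.smul_eq_iff_mem_normalizer.mpr (le_normalizer htP)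
  have hψt : ψ t ≠ 1 := fun h => Sylow.smul_ne_of_zpowers_eq hPt hg.symm <| by
    simpa [ψ] using congr($h (g • P))
  have hψy : ψ (t * (g * t * g⁻¹)) ≠ 1 := fun h => Sylow.smul_ne_of_zpowers_eq hPt hg.symm <|
    by simpa [ψ, mul_smul, htP'] using congr($h (g • P))
  refine eq_top_of_mem_of_coprime_orderOf (mem_map_of_mem ψ (mem_sup_left htP))
    (mem_map_of_mem ψ (mem_sup_right (mem_zpowers _))) ?_ ?_
  all_goals rw [orderOf_eq_prime (by rw [← map_pow, ht2, map_one]) hψt,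
    orderOf_eq_prime (by rw [← map_pow, hy, map_one]) hψy]
  · norm_num
  · rw [Nat.card_perm, hN]; rfl

theorem exists_subgroup_domRestrict_toPermHom_sylow_bijective [Finite G] (P : Sylow 2 G)
    (hP : Nat.card P = 2) (hN : Nat.card (Sylow 2 G) = 3) :
    ∃ H : Subgroup G, Function.Bijective ((toPermHom G (Sylow 2 G)).domRestrict H) ∧
      H ≤ centralizer (toPermHom G (Sylow 2 G)).ker := by
  obtain ⟨t, hPt⟩ :=
    (P : Subgroup G).isCyclic_iff_exists_zpowers_eq_top.mp (isCyclic_of_prime_card hP)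
  have htP : t ∈ (P : Subgroup G) := hPt ▸ mem_zpowers t
  have ht : orderOf t = 2 := by rw [← Nat.card_zpowers, hPt, hP]
  have ht2 : t ^ 2 = 1 := ht ▸ pow_orderOf_eq_one t
  obtain ⟨g, hg⟩ := P.exists_smul_ne (by omega)
  set y := t * (g * t * g⁻¹)
  have hy : y ^ 3 = 1 := mul_conj_pow_three_eq_one P hP hN htP ht g
  set H := (P : Subgroup G) ⊔ zpowers y
  have hcard : Nat.card H ≤ Nat.card (Equiv.Perm (Sylow 2 G)) := by
    have hPy : (P : Subgroup G) ≤ normalizer (zpowers y : Set G) := hPt ▸ zpowers_le.mpr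
      (mem_normalizer_zpowers_of_conj_eq_inv
        (conj_mul_eq_inv_of_sq_eq_one ht2 (by rw [conj_pow, ht2]; group)))
    calc Nat.card H ≤ Nat.card P * Nat.card (zpowers y) := card_sup_le_of_le_normalizer hPy
      _ ≤ 2 * 3 := by
        rw [hP, Nat.card_zpowers]
        exact Nat.mul_le_mul_left 2 (orderOf_le_of_pow_eq_one (by norm_num) hy)
      _ = Nat.card (Equiv.Perm (Sylow 2 G)) := by rw [Nat.card_perm, hN]; rfl
  have hsurj : ((toPermHom G (Sylow 2 G)).domRestrict H).range = ⊤ := by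
    rw [MonoidHom.domRestrict_range]
    exact map_toPermHom_sup_zpowers_mul_conj_eq_top P hN hPt ht2 hg hy
  have htC : t ∈ centralizer ((toPermHom G (Sylow 2 G)).ker : Set G) :=
    le_centralizer_iff.mpr (ker_toPermHom_sylow_le_centralizer P hP) htP
  refine ⟨H, (MonoidHom.range_eq_top.mp hsurj).bijective_of_nat_card_le hcard, sup_le ?_ ?_⟩
  · exact le_centralizer_iff.mpr (ker_toPermHom_sylow_le_centralizer P hP)
  · exact zpowers_le.mpr (mul_mem htC (Normal.conj_mem inferInstance t htC g))

end

/-- If `P` is a Sylow `2`-subgroup of the finite group `G` with `|P| = 2` and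
`|G : N_G(P)| = 3`, then `G ≅ S₃ × A` for some finite group `A` of odd order. -/
theorem isoS3ProdOdd_of_sylow_two_card_two_index_normalizer_three {G : Type*} [Group G]
    [Fintype G] (P : Sylow 2 G) (hP : Nat.card ↥(P : Subgroup G) = 2)
    (hN : (Subgroup.normalizer ((P : Subgroup G) : Set G)).index = 3) :
    ∃ (A : Type) (_ : Group A) (_ : Fintype A), Odd (Fintype.card A) ∧
      Nonempty (G ≃* Equiv.Perm (Fin 3) × A) := by
  have hcard : Nat.card (Sylow 2 G) = 3 := P.card_eq_index_normalizer.trans hN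
  obtain ⟨H, hbij, hcomm⟩ := exists_subgroup_domRestrict_toPermHom_sylow_bijective P hP hcard
  set A := (toPermHom G (Sylow 2 G)).ker
  let e : G ≃* H × A := MonoidHom.mulEquivProdKer _ H hbij hcomm
  let eH : H ≃* Equiv.Perm (Fin 3) :=
    (MulEquiv.ofBijective _ hbij).trans (Finite.equivFinOfCardEq hcard).permCongrHom
  have hA : Odd (Nat.card A) := by
    have hG : Nat.card G = 2 * (3 * Nat.card A) := by
      rw [Nat.card_congr e.toEquiv, Nat.card_prod, Nat.card_congr eH.toEquiv, Nat.card_perm,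
        Nat.card_fin, ← mul_assoc]
      rfl
    exact (Nat.odd_mul.mp (Nat.not_even_iff_odd.mp fun h =>
      P.not_dvd_of_card_eq_mul hP hG h.two_dvd)).2
  let _ : Fintype (Shrink.{0} A) := Fintype.ofFinite _
  refine ⟨Shrink A, inferInstance, inferInstance, ?_,
    ⟨e.trans (eH.prodCongr Shrink.mulEquiv.symm)⟩⟩
  rwa [← Nat.card_eq_fintype_card, Nat.card_congr (equivShrink.{0} A).symm]
end

section
/- Let m be a positive even integer and let G = S_3 × S_3 × ⋯ × S_3 (m factors), where S_3 is the symmetric group on 3 letters. Then χ(C_2(G)) = 3^m = |G|_{2'}, and G is not 2-closed. -/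
open scoped Classical in
/-- The Euler characteristic of (the order complex of) a finite poset `P`:
`χ(P) = Σ_{i ≥ 0} (-1)^i c_i` where `c_i` is the number of chains in `P` with
exactly `i + 1` elements; a chain with `i + 1` elements contributes `(-1)^i = (-1)^(card+1)`. -/
noncomputable def posetEulerChar (P : Type*) [PartialOrder P] [Finite P] : ℤ :=
  letI := Fintype.ofFinite P
  ∑ s ∈ (Finset.univ : Finset P).powerset,
    if s.Nonempty ∧ IsChain (· ≤ ·) (s : Set P) then (-1 : ℤ) ^ (s.card + 1) else 0

/-- `μ` is the Möbius function of the poset `P`: `μ(x,x) = 1` and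
`Σ_{x ≤ z ≤ y} μ(x,z) = 0` for all `x < y`. -/
def IsMobiusOf {P : Type*} [PartialOrder P] (μ : P → P → ℤ) : Prop :=
  (∀ x, μ x x = 1) ∧ ∀ x y : P, x < y → (∑ᶠ z ∈ Set.Icc x y, μ x z) = 0

/-- The coset poset `C_p(G)`: all right cosets `Hx` (as subsets of `G`, ordered by
inclusion) where `H` ranges over the `p`-subgroups of `G` (including the trivial one). -/
def pCosets (p : ℕ) (G : Type*) [Group G] : Set (Set G) :=
  {S | ∃ (H : Subgroup G) (x : G), IsPGroup p H ∧ S = (fun h => h * x) '' (H : Set G)}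

/-!
For a finite poset `P`, `χ(P) = ∑ₓ f x` for every `f : P → ℤ` whose sum over each `{y | x ≤ y}`
is `1`: sort the chains by their greatest element and note that every `Iic y` is a cone. Such
weights exist, and they can be pushed forward along a Galois connection `∏ᵢ Qᵢ ⇄ P`, so `χ` is
multiplicative along such connections. Projection to the factors and boxes `∏ᵢ cᵢ` form one
between `C_p(∏ᵢ Gᵢ)` and `∏ᵢ C_p(Gᵢ)`. In `S₃` the weight `-2` on the six points and `1` on the
nine 2-element cosets gives `χ(C₂(S₃)) = -3`, hence `χ(C₂(S₃ᵐ)) = (-3)ᵐ`. Finally, `(0 1)(0 2)` is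
a 3-cycle, while a normal Sylow 2-subgroup would contain every product of involutions.
-/

open Finset

section ChainSums

open scoped Classical

variable {P : Type*} [PartialOrder P] [Fintype P]

variable (P) in
noncomputable def nonemptyChains : Finset (Finset P) :=
  {s | s.Nonempty ∧ IsChain (· ≤ ·) (s : Set P)}

theorem mem_nonemptyChains {s : Finset P} :
    s ∈ nonemptyChains P ↔ s.Nonempty ∧ IsChain (· ≤ ·) (s : Set P) := by
  simp [nonemptyChains]

theorem posetEulerChar_eq_sum_nonemptyChains :
    posetEulerChar P = ∑ s ∈ nonemptyChains P, (-1 : ℤ) ^ (#s + 1) := by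
  rw [posetEulerChar, Subsingleton.elim (Fintype.ofFinite P), powerset_univ, nonemptyChains,
    sum_filter]

theorem exists_isGreatest_of_mem_nonemptyChains {s : Finset P} (hs : s ∈ nonemptyChains P) :
    ∃ m, IsGreatest (s : Set P) m := by
  obtain ⟨hne, hch⟩ := mem_nonemptyChains.1 hs
  obtain ⟨m, hm⟩ := s.exists_maximal hne
  exact ⟨m, hm.1, fun a ha => (hch.total ha hm.1).elim id (hm.2 ha)⟩

theorem exists_isLeast_of_mem_nonemptyChains {s : Finset P} (hs : s ∈ nonemptyChains P) :
    ∃ m, IsLeast (s : Set P) m := by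
  obtain ⟨hne, hch⟩ := mem_nonemptyChains.1 hs
  obtain ⟨m, hm⟩ := s.exists_minimal hne
  exact ⟨m, hm.1, fun a ha => (hch.total hm.1 ha).elim id (hm.2 ha)⟩

/-- Toggling the cone point `y` pairs off all chains in `S` except `{y}`. -/
theorem sum_nonemptyChains_subset_cone {S : Set P} {y : P} (hyS : y ∈ S)
    (hS : ∀ a ∈ S, a ≤ y ∨ y ≤ a) :
    ∑ s ∈ nonemptyChains P with ↑s ⊆ S, (-1 : ℤ) ^ (#s + 1) = 1 := by
  set A : Finset (Finset P) := {s | IsChain (· ≤ ·) (s : Set P) ∧ ↑s ⊆ S}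
  have htoggle : ∑ s ∈ A, (-1 : ℤ) ^ #s = 0 := by
    refine sum_involution (fun s _ => if y ∈ s then s.erase y else insert y s)
      (fun s _ => ?_) (fun s _ _ => ?_) (fun s hs => ?_) (fun s _ => ?_)
    · split_ifs with h
      · rw [← card_erase_add_one h, pow_succ]; ring
      · rw [card_insert_of_notMem h, pow_succ]; ring
    · split_ifs with h
      · exact fun he => erase_eq_self.1 he h
      · exact fun he => h (insert_eq_self.1 he)
    · obtain ⟨hch, hsS⟩ := (mem_filter.1 hs).2
      simp only [A, mem_filter, mem_univ, true_and]
      split_ifs with h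
      · exact ⟨hch.mono (by simp), (coe_erase y s ▸ Set.sdiff_subset).trans hsS⟩
      · rw [coe_insert]
        exact ⟨hch.insert fun b hb _ => (hS b (hsS hb)).symm, Set.insert_subset hyS hsS⟩
    · by_cases h : y ∈ s <;> simp [h]
  have hempty : ∅ ∈ A := by simp [A, Set.Subsingleton.isChain]
  have hA : A.erase ∅ = (nonemptyChains P).filter (↑· ⊆ S) := by
    ext s
    simp [A, nonemptyChains, nonempty_iff_ne_empty, and_assoc]
  rw [← add_sum_erase _ _ hempty, hA] at htoggle
  simp only [pow_succ, mul_neg_one, sum_neg_distrib, card_empty, pow_zero] at htoggle ⊢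
  linarith

theorem posetEulerChar_eq_sum_of_forall_sum_ge_eq_one (f : P → ℤ)
    (hf : ∀ x, ∑ y with x ≤ y, f y = 1) :
    posetEulerChar P = ∑ y, f y := by
  rw [posetEulerChar_eq_sum_nonemptyChains]
  calc ∑ s ∈ nonemptyChains P, (-1 : ℤ) ^ (#s + 1)
      = ∑ s ∈ nonemptyChains P, ∑ y with ↑s ⊆ Set.Iic y, (-1 : ℤ) ^ (#s + 1) * f y := by
        refine sum_congr rfl fun s hs => ?_
        obtain ⟨m, hm⟩ := exists_isGreatest_of_mem_nonemptyChains hs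
        have hub : ∀ y, ↑s ⊆ Set.Iic y ↔ m ≤ y := fun y =>
          ⟨fun h => h hm.1, fun h _ ha => (hm.2 ha).trans h⟩
        rw [← mul_sum, filter_congr fun y _ => hub y, hf, mul_one]
    _ = ∑ y, ∑ s ∈ nonemptyChains P with ↑s ⊆ Set.Iic y, (-1 : ℤ) ^ (#s + 1) * f y :=
        sum_comm' fun s y => by simp
    _ = ∑ y, f y := by
        refine sum_congr rfl fun y _ => ?_
        rw [← sum_mul, sum_nonemptyChains_subset_cone (S := Set.Iic y) le_rfl
          fun a ha => Or.inl ha, one_mul]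

theorem exists_forall_sum_ge_eq_one : ∃ f : P → ℤ, ∀ x, ∑ y with x ≤ y, f y = 1 := by
  refine ⟨fun y => ∑ s ∈ nonemptyChains P with y ∈ s ∧ ∀ a ∈ s, y ≤ a,
    (-1 : ℤ) ^ (#s + 1), fun x => ?_⟩
  rw [sum_comm' (t' := (nonemptyChains P).filter (↑· ⊆ Set.Ici x))
    (s' := fun s => {y | y ∈ s ∧ ∀ a ∈ s, y ≤ a}) fun y s => ?_]
  · refine (sum_congr rfl fun s hs => ?_).trans
      (sum_nonemptyChains_subset_cone (S := Set.Ici x) le_rfl fun a ha => Or.inr ha)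
    obtain ⟨m, hm⟩ := exists_isLeast_of_mem_nonemptyChains (mem_filter.1 hs).1
    have hleast : ({y | y ∈ s ∧ ∀ a ∈ s, y ≤ a} : Finset P) = {m} :=
      eq_singleton_iff_unique_mem.2
        ⟨mem_filter.2 ⟨mem_univ m, hm⟩, fun y hy => (hm.unique (mem_filter.1 hy).2).symm⟩
    rw [hleast, sum_singleton]
  · simp only [mem_filter, mem_univ, true_and]
    constructor
    · rintro ⟨hxy, hs, hys, hy⟩
      exact ⟨⟨hys, hy⟩, hs, fun a ha => hxy.trans (hy a ha)⟩
    · rintro ⟨⟨hys, hy⟩, hs, hsx⟩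
      exact ⟨hsx hys, hs, hys, hy⟩

end ChainSums

theorem posetEulerChar_eq_prod_of_galoisConnection {P ι : Type*} {Q : ι → Type*}
    [PartialOrder P] [Finite P] [Fintype ι] [∀ i, PartialOrder (Q i)] [∀ i, Finite (Q i)]
    {l : P → ∀ i, Q i} {u : (∀ i, Q i) → P} (gc : GaloisConnection l u) :
    posetEulerChar P = ∏ i, posetEulerChar (Q i) := by
  classical
  have := Fintype.ofFinite P
  have := fun i => Fintype.ofFinite (Q i)
  choose f hf using fun i => exists_forall_sum_ge_eq_one (P := Q i)
  let F : P → ℤ := fun a => ∑ d with u d = a, ∏ i, f i (d i)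
  have hF : ∀ x, ∑ a with x ≤ a, F a = 1 := by
    intro x
    calc ∑ a with x ≤ a, F a = ∑ d with x ≤ u d, ∏ i, f i (d i) := by
          rw [← sum_fiberwise_of_maps_to (t := {a | x ≤ a}) (g := u) (by simp)]
          refine sum_congr rfl fun a ha => ?_
          rw [filter_filter]
          exact sum_congr (filter_congr fun d _ =>
            ⟨fun h => ⟨h ▸ (mem_filter.1 ha).2, h⟩, And.right⟩) fun _ _ => rfl
      _ = ∑ d : ∀ i, Q i, ∏ i, if l x i ≤ d i then f i (d i) else 0 := by
          rw [sum_filter]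
          refine sum_congr rfl fun d _ => ?_
          simp only [Fintype.prod_ite_zero, ← gc.le_iff_le, Pi.le_def]
      _ = ∏ i, ∑ q with l x i ≤ q, f i q := by
          simp_rw [sum_filter, Fintype.prod_sum]
      _ = 1 := Fintype.prod_eq_one _ fun i => hf i (l x i)
  calc posetEulerChar P = ∑ a, F a := posetEulerChar_eq_sum_of_forall_sum_ge_eq_one F hF
    _ = ∑ d : ∀ i, Q i, ∏ i, f i (d i) := sum_fiberwise _ _ _
    _ = ∏ i, ∑ q, f i q := by rw [Fintype.prod_sum]
    _ = ∏ i, posetEulerChar (Q i) :=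
        prod_congr rfl fun i _ => (posetEulerChar_eq_sum_of_forall_sum_ge_eq_one _ (hf i)).symm

section CosetPoset

variable {p : ℕ}

theorem image_mem_pCosets {G K : Type*} [Group G] [Group K] (φ : G →* K) {c : Set G}
    (hc : c ∈ pCosets p G) : φ '' c ∈ pCosets p K := by
  obtain ⟨H, x, hH, rfl⟩ := hc
  refine ⟨H.map φ, φ x, hH.map φ, ?_⟩
  rw [Subgroup.coe_map, Set.image_image, Set.image_image]
  simp_rw [map_mul]

theorem IsPGroup.pi {ι : Type*} [Fintype ι] {K : ι → Type*} [∀ i, Group (K i)]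
    {H : ∀ i, Subgroup (K i)} (hH : ∀ i, IsPGroup p (H i)) :
    IsPGroup p (Subgroup.pi Set.univ H) := by
  intro g
  choose k hk using fun i => hH i ⟨g.1 i, g.2 i (Set.mem_univ i)⟩
  refine ⟨∑ i, k i, Subtype.ext (funext fun i => ?_)⟩
  have hki : (g.1 i) ^ p ^ k i = 1 := congrArg Subtype.val (hk i)
  rw [← pow_mul_pow_sub p (single_le_sum (fun j _ => Nat.zero_le (k j)) (mem_univ i))]
  simp [pow_mul, hki]

theorem pi_mem_pCosets {ι : Type*} [Fintype ι] {K : ι → Type*} [∀ i, Group (K i)]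
    {c : ∀ i, Set (K i)} (hc : ∀ i, c i ∈ pCosets p (K i)) :
    Set.univ.pi c ∈ pCosets p (∀ i, K i) := by
  choose H x hH hHx using hc
  refine ⟨Subgroup.pi Set.univ H, x, IsPGroup.pi hH, ?_⟩
  rw [funext hHx]
  simp_rw [Set.image_mul_right]
  rfl

theorem galoisConnection_pCosets_pi {ι : Type*} [Fintype ι] {K : ι → Type*}
    [∀ i, Group (K i)] :
    GaloisConnection
      (fun c (i : ι) => (⟨Function.eval i '' c.1,
        image_mem_pCosets (Pi.evalMonoidHom K i) c.2⟩ : pCosets p (K i)))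
      (fun d : ∀ i, pCosets p (K i) => (⟨Set.univ.pi fun i => (d i).1,
        pi_mem_pCosets fun i => (d i).2⟩ : pCosets p (∀ i, K i))) := by
  intro c d
  simp only [Pi.le_def, ← Subtype.coe_le_coe, Set.subset_pi_iff, Set.image_subset_iff,
    Set.mem_univ, forall_const]

theorem posetEulerChar_pCosets_pi {ι : Type*} [Fintype ι] {K : ι → Type*}
    [∀ i, Group (K i)] [∀ i, Finite (K i)] :
    posetEulerChar (pCosets p (∀ i, K i)) = ∏ i, posetEulerChar (pCosets p (K i)) :=
  posetEulerChar_eq_prod_of_galoisConnection galoisConnection_pCosets_pi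

end CosetPoset

theorem isPGroup_zpowers_of_pow_eq_one {G : Type*} [Group G] {p : ℕ} {g : G} (hg : g ^ p = 1) :
    IsPGroup p (Subgroup.zpowers g) :=
  IsPGroup.of_card_dvd_pow (n := 1) <| by
    rw [Nat.card_zpowers, pow_one]
    exact orderOf_dvd_of_pow_eq_one hg

theorem pair_mem_pCosets_two {G : Type*} [Group G] {τ : G} (hτ : τ * τ = 1) (x : G) :
    ({x, τ * x} : Set G) ∈ pCosets 2 G := by
  have hτ2 : τ ^ (2 : ℤ) = 1 := by rw [zpow_two, hτ]
  have hcoe : ((Subgroup.zpowers τ : Subgroup G) : Set G) = {1, τ} := by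
    ext g
    simp only [SetLike.mem_coe, Subgroup.mem_zpowers_iff, Set.mem_insert_iff,
      Set.mem_singleton_iff]
    constructor
    · rintro ⟨k, rfl⟩
      obtain ⟨j, rfl | rfl⟩ := Int.even_or_odd' k
      · simp [zpow_mul, hτ2]
      · simp [zpow_add_one, zpow_mul, hτ2]
    · rintro (rfl | rfl)
      exacts [⟨0, zpow_zero _⟩, ⟨1, zpow_one _⟩]
  refine ⟨_, x, isPGroup_zpowers_of_pow_eq_one (by rw [sq, hτ]), ?_⟩
  rw [hcoe, Set.image_pair, one_mul]

theorem not_exists_normal_sylow_of_mul {G : Type*} [Group G] [Finite G] {p : ℕ} [Fact p.Prime]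
    {a b : G} (ha : a ^ p = 1) (hb : b ^ p = 1) (hab : ∀ k, (a * b) ^ p ^ k ≠ 1) :
    ¬ ∃ P : Sylow p G, (P : Subgroup G).Normal := by
  rintro ⟨P, hP⟩
  have := Sylow.unique_of_normal P hP
  have hmem : ∀ g : G, g ^ p = 1 → g ∈ P := fun g hg => by
    obtain ⟨Q, hQ⟩ := (isPGroup_zpowers_of_pow_eq_one hg).exists_le_sylow
    exact Subsingleton.elim Q P ▸ hQ (Subgroup.mem_zpowers g)
  obtain ⟨k, hk⟩ := P.isPGroup' ⟨a * b, mul_mem (hmem a ha) (hmem b hb)⟩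
  exact hab k (congrArg Subtype.val hk)

local notation "S₃" => Equiv.Perm (Fin 3)

namespace PermThree

theorem mul_self_eq_one_of_isPGroup_two {H : Subgroup S₃} (hH : IsPGroup 2 H) {h : S₃}
    (hh : h ∈ H) : h * h = 1 := by
  obtain ⟨k, hk⟩ := hH ⟨h, hh⟩
  have hdvd : orderOf h ∣ 2 ^ k := orderOf_dvd_of_pow_eq_one (congrArg Subtype.val hk)
  have h6 : orderOf h ∣ 2 * 3 := by
    simpa [Fintype.card_perm, Nat.factorial] using orderOf_dvd_card (x := h)
  rw [← sq, ← orderOf_dvd_iff_pow_eq_one]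
  exact (Nat.Coprime.pow_left k (by norm_num : Nat.Coprime 2 3)).coprime_dvd_left hdvd
    |>.dvd_of_dvd_mul_right h6

theorem exists_coe_eq_pair_of_isPGroup_two {H : Subgroup S₃} (hH : IsPGroup 2 H) :
    ∃ τ : S₃, τ * τ = 1 ∧ (H : Set S₃) = {1, τ} := by
  have hinv : ∀ a b : S₃, a * a = 1 → b * b = 1 → a * b * (a * b) = 1 →
      a = 1 ∨ b = 1 ∨ a = b := by decide
  by_cases hbot : ∃ τ ∈ H, τ ≠ 1
  · obtain ⟨τ, hτH, hτ1⟩ := hbot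
    refine ⟨τ, mul_self_eq_one_of_isPGroup_two hH hτH,
      Set.Subset.antisymm (fun g hg => ?_) ?_⟩
    · have := hinv g τ (mul_self_eq_one_of_isPGroup_two hH hg)
        (mul_self_eq_one_of_isPGroup_two hH hτH)
        (mul_self_eq_one_of_isPGroup_two hH (H.mul_mem hg hτH))
      simpa [hτ1] using this
    · exact Set.insert_subset H.one_mem (Set.singleton_subset_iff.2 hτH)
  · push Not at hbot
    refine ⟨1, one_mul 1, ?_⟩
    ext g
    simpa using ⟨hbot g, fun h => h ▸ H.one_mem⟩

def cosetsTwo : Finset (Finset S₃) :=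
  (univ ×ˢ ({τ | τ * τ = 1} : Finset S₃)).image fun q => {q.1, q.2 * q.1}

theorem pCosets_two_eq :
    pCosets 2 S₃ = (↑) '' (cosetsTwo : Set (Finset S₃)) := by
  ext c
  constructor
  · rintro ⟨H, x, hH, rfl⟩
    obtain ⟨τ, hτ, hH⟩ := exists_coe_eq_pair_of_isPGroup_two hH
    refine ⟨{x, τ * x}, Finset.mem_image.2 ⟨(x, τ), by simp [hτ], rfl⟩, ?_⟩
    rw [hH, Set.image_pair, one_mul]
    push_cast
    rfl
  · rintro ⟨d, hd, rfl⟩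
    obtain ⟨⟨x, τ⟩, hq, rfl⟩ := Finset.mem_image.1 hd
    push_cast
    exact pair_mem_pCosets_two (by simpa using hq) x

theorem sum_cosetsTwo_weight :
    ∑ d ∈ cosetsTwo, (if #d = 1 then (-2 : ℤ) else 1) = -3 := by
  decide

/-- A point lies in itself and in three 2-element cosets, whence its weight `1 - 3`. -/
theorem sum_cosetsTwo_weight_of_subset :
    ∀ c ∈ cosetsTwo,
      ∑ d ∈ cosetsTwo with c ⊆ d, (if #d = 1 then (-2 : ℤ) else 1) = 1 := by
  decide

theorem posetEulerChar_pCosets_two : posetEulerChar (pCosets 2 S₃) = -3 := by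
  classical
  have := Fintype.ofFinite (pCosets 2 S₃)
  have hsum : ∀ g : Set S₃ → ℤ, ∑ c : pCosets 2 S₃, g c = ∑ d ∈ cosetsTwo, g d :=
    fun g => (sum_subtype _ (fun c => by simp [pCosets_two_eq]) g).symm.trans
      (sum_image fun _ _ _ _ h => coe_injective h)
  rw [posetEulerChar_eq_sum_of_forall_sum_ge_eq_one (fun c => if c.1.ncard = 1 then -2 else 1),
    hsum (fun c => if c.ncard = 1 then -2 else 1)]
  · simpa using sum_cosetsTwo_weight
  · rintro ⟨c, hc⟩
    obtain ⟨c, hcL, rfl⟩ := pCosets_two_eq ▸ hc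
    rw [sum_filter]
    refine (hsum fun d =>
      if (c : Set S₃) ⊆ d then (if d.ncard = 1 then -2 else 1) else 0).trans ?_
    simpa [← sum_filter] using sum_cosetsTwo_weight_of_subset c hcL

theorem ordCompl_two_card_fun_fin (m : ℕ) :
    ordCompl[2] (Fintype.card (Fin m → S₃)) = 3 ^ m := by
  have hcard : Fintype.card (Fin m → S₃) = 2 ^ m * 3 ^ m := by
    simp [Fintype.card_perm, Nat.factorial, ← mul_pow]
  rw [hcard, Nat.ordCompl_pow_mul_of_not_dvd m Nat.prime_two]
  exact Nat.prime_two.coprime_iff_not_dvd.1 (Nat.Coprime.pow_right m (by norm_num))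

theorem not_exists_normal_sylow_two_fun_fin {m : ℕ} (hm : 0 < m) :
    ¬ ∃ P : Sylow 2 (Fin m → S₃), (P : Subgroup (Fin m → S₃)).Normal := by
  have : Fact (Nat.Prime 2) := ⟨Nat.prime_two⟩
  refine not_exists_normal_sylow_of_mul (a := fun _ => Equiv.swap 0 1)
    (b := fun _ => Equiv.swap 0 2) (funext fun _ => (sq _).trans (Equiv.swap_mul_self 0 1))
    (funext fun _ => (sq _).trans (Equiv.swap_mul_self 0 2))
    fun k hk => ?_
  have h3 : orderOf (Equiv.swap (0 : Fin 3) 1 * Equiv.swap 0 2) = 3 :=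
    orderOf_eq_prime (by decide) (by decide)
  have hdvd : 3 ∣ 2 ^ k := h3 ▸ orderOf_dvd_of_pow_eq_one (congrFun hk ⟨0, hm⟩)
  exact absurd (Nat.Coprime.eq_one_of_dvd (Nat.Coprime.pow_right k (by norm_num)) hdvd)
    (by norm_num)

end PermThree

/-- For `G = S₃ × ⋯ × S₃` (`m` factors) with `m` a positive even integer,
`χ(C₂(G)) = 3^m = |G|_{2'}` and `G` is not `2`-closed. -/
theorem euler_char_pCosets_prod_S3 (m : ℕ) (hm : 0 < m) (hEven : Even m) :
    posetEulerChar ↥(pCosets 2 (Fin m → Equiv.Perm (Fin 3))) = (3 : ℤ) ^ m ∧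
    (3 ^ m : ℕ) = ordCompl[2] (Fintype.card (Fin m → Equiv.Perm (Fin 3))) ∧
    ¬ ∃ P : Sylow 2 (Fin m → Equiv.Perm (Fin 3)),
        (P : Subgroup (Fin m → Equiv.Perm (Fin 3))).Normal := by
  refine ⟨?_, (PermThree.ordCompl_two_card_fun_fin m).symm,
    PermThree.not_exists_normal_sylow_two_fun_fin hm⟩
  rw [posetEulerChar_pCosets_pi (K := fun _ : Fin m => S₃), prod_const,
    PermThree.posetEulerChar_pCosets_two, card_univ, Fintype.card_fin, hEven.neg_pow]
end
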